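/- arXiv:math/0204183 — 4 statements merged into one kernel-verified Lean document; each statement's English description precedes it below -/
import Mathlib

section
/- Let Δ be an irreducible crystallographic root system in V with a base and positive roots Δ+, let θ be the highest root, normalize so that (θ,θ) = 2, and let ρ = (1/2)·Σ_{β∈Δ+} β. Then Σ_{β∈Δ+} (β, θ)² = 2(ρ, θ) + 2. -/
open scoped RealInnerProductSpace

/-- With `Δ` an irreducible crystallographic root system,
`θ` the highest root normalized so `(θ,θ) = 2`, and `ρ` the half-sum of the
positive roots, one has `∑_{β ∈ Δ⁺} (β,θ)² = 2(ρ,θ) + 2`. -/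
theorem stmt_3 {V : Type*} [NormedAddCommGroup V] [InnerProductSpace ℝ V]
    (Δ : Finset V) (h0 : (0 : V) ∉ Δ)
    (hspan : Submodule.span ℝ (Δ : Set V) = ⊤)
    (hrefl : ∀ α ∈ Δ, ∀ β ∈ Δ, β - (2 * ⟪β, α⟫ / ⟪α, α⟫) • α ∈ Δ)
    (hcrys : ∀ α ∈ Δ, ∀ β ∈ Δ, ∃ m : ℤ, 2 * ⟪β, α⟫ = (m : ℝ) * ⟪α, α⟫)
    (hirr : ¬ ∃ S T : Set V, S.Nonempty ∧ T.Nonempty ∧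
      (∀ x ∈ S, ∀ y ∈ T, ⟪x, y⟫ = 0) ∧ (Δ : Set V) = S ∪ T)
    {ι : Type*} [Fintype ι] (b : Module.Basis ι ℝ V) (hb : ∀ i, b i ∈ Δ)
    (n : V → ι → ℤ)
    (hcoeff : ∀ β ∈ Δ, β = ∑ i, (n β i : ℝ) • b i)
    (hsign : ∀ β ∈ Δ, (∀ i, 0 ≤ n β i) ∨ (∀ i, n β i ≤ 0))
    (Δpos : Finset V)
    (hpos : ∀ β, β ∈ Δpos ↔ β ∈ Δ ∧ ∀ i, 0 ≤ n β i)
    (θ : V) (hθ : θ ∈ Δpos)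
    (hhighest : ∀ β ∈ Δ, ∃ c : ι → ℝ, (∀ i, 0 ≤ c i) ∧ θ - β = ∑ i, c i • b i)
    (hnorm : ⟪θ, θ⟫ = 2)
    (ρ : V) (hρ : ρ = (2⁻¹ : ℝ) • ∑ β ∈ Δpos, β) :
    ∑ β ∈ Δpos, ⟪β, θ⟫ ^ 2 = 2 * ⟪ρ, θ⟫ + 2 := by
  classical
  have hθΔ : θ ∈ Δ := ((hpos θ).1 hθ).1
  have hne0 : ∀ γ ∈ Δ, γ ≠ 0 := fun γ hγ h => h0 (h ▸ hγ)
  have hselfpos : ∀ γ ∈ Δ, (0:ℝ) < ⟪γ, γ⟫ := fun γ hγ =>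
    lt_of_le_of_ne real_inner_self_nonneg
      (fun h => hne0 γ hγ (inner_self_eq_zero.1 h.symm))
  -- coordinate extraction
  have hrepr : ∀ (c : ι → ℝ) (i : ι), b.repr (∑ j, c j • b j) i = c i := by
    intro c i
    rw [b.repr_sum_self]
  -- (θ, b i) ≥ 0 for each simple root
  have hθb : ∀ i, 0 ≤ ⟪θ, b i⟫ := by
    intro i
    have hbp := hselfpos (b i) (hb i)
    set c : ℝ := 2 * ⟪θ, b i⟫ / ⟪b i, b i⟫ with hc
    have hmem : θ - c • b i ∈ Δ := hrefl (b i) (hb i) θ hθΔ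
    obtain ⟨cf, hcf, heq⟩ := hhighest _ hmem
    have h1 : θ - (θ - c • b i) = c • b i := by abel
    rw [h1] at heq
    have hci : c = cf i := by
      have h2 : ∑ j, (if j = i then c else 0) • b j = c • b i := by
        simp [ite_smul]
      have h3 := congrArg (fun v => b.repr v i) (h2.trans heq)
      simp only [hrepr] at h3
      simpa using h3
    have hcge : 0 ≤ c := hci ▸ hcf i
    rw [hc] at hcge
    have h4 : 0 ≤ 2 * ⟪θ, b i⟫ / ⟪b i, b i⟫ * ⟪b i, b i⟫ :=
      mul_nonneg hcge hbp.le
    rw [div_mul_cancel₀ _ hbp.ne'] at h4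
    linarith
  -- (β, θ) ≥ 0 for positive roots
  have hnonneg : ∀ β ∈ Δpos, 0 ≤ ⟪β, θ⟫ := by
    intro β hβ
    have hβΔ : β ∈ Δ := ((hpos β).1 hβ).1
    have hn := ((hpos β).1 hβ).2
    rw [hcoeff β hβΔ]
    rw [sum_inner]
    refine Finset.sum_nonneg fun i _ => ?_
    rw [real_inner_smul_left, real_inner_comm]
    exact mul_nonneg (by exact_mod_cast hn i) (hθb i)
  -- negation of a root is a root
  have hneg : ∀ γ ∈ Δ, -γ ∈ Δ := by
    intro γ hγ
    have h := hrefl γ hγ γ hγ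
    have hγγ : ⟪γ, γ⟫ ≠ 0 := (hselfpos γ hγ).ne'
    rw [show (2 * ⟪γ, γ⟫ / ⟪γ, γ⟫ : ℝ) = 2 by
      rw [mul_div_assoc, div_self hγγ, mul_one]] at h
    rw [show γ - (2:ℝ) • γ = -γ by module] at h
    exact h
  -- key: for positive β ≠ θ, (β,θ)² = (β,θ)
  have key : ∀ β ∈ Δpos, β ≠ θ → ⟪β, θ⟫ ^ 2 = ⟪β, θ⟫ := by
    intro β hβ hneθ
    have hβΔ : β ∈ Δ := ((hpos β).1 hβ).1
    obtain ⟨m, hm⟩ := hcrys θ hθΔ β hβΔ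
    rw [hnorm] at hm
    have hmeq : ⟪β, θ⟫ = (m : ℝ) := by linarith
    have hm0 : 0 ≤ m := by
      have := hnonneg β hβ
      rw [hmeq] at this
      exact_mod_cast this
    have hm1 : m ≤ 1 := by
      by_contra hcon
      push_neg at hcon
      have hm2 : (2:ℝ) ≤ (m:ℝ) := by exact_mod_cast hcon
      have hs : β - (m : ℝ) • θ ∈ Δ := by
        have h := hrefl θ hθΔ β hβΔ
        rwa [hnorm, hmeq, show (2 * (m:ℝ) / 2 : ℝ) = (m:ℝ) by ring] at h
      have hδ : (m : ℝ) • θ - β ∈ Δ := by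
        have h := hneg _ hs
        rwa [neg_sub] at h
      obtain ⟨cf, hcf, hceq⟩ := hhighest _ hδ
      obtain ⟨df, hdf, hdeq⟩ := hhighest β hβΔ
      have hsum : ((2 - (m:ℝ))) • θ = ∑ i, (cf i + df i) • b i := by
        have h5 : (θ - ((m:ℝ) • θ - β)) + (θ - β) = (2 - (m:ℝ)) • θ := by
          rw [sub_smul]; module
        rw [← h5, hceq, hdeq, ← Finset.sum_add_distrib]
        simp [add_smul]
      have hθeq := hcoeff θ hθΔ
      have h6 : ((2 - (m:ℝ))) • θ = ∑ j, ((2 - (m:ℝ)) * (n θ j : ℝ)) • b j := by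
        conv_lhs => rw [hθeq]
        rw [Finset.smul_sum]
        simp [smul_smul]
      have hsum' : ∑ j, ((2 - (m:ℝ)) * (n θ j : ℝ)) • b j = ∑ j, (cf j + df j) • b j := by
        rw [← h6]; exact hsum
      have hco : ∀ i, (2 - (m:ℝ)) * (n θ i : ℝ) = cf i + df i := by
        intro i
        have h7 := congrArg (fun v => b.repr v i) hsum'
        simp only [hrepr] at h7
        exact h7
      have hcd0 : ∀ i, df i = 0 := by
        intro i
        have hn0 : (0:ℝ) ≤ (n θ i : ℝ) := by exact_mod_cast ((hpos θ).1 hθ).2 i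
        have h8 : (2 - (m:ℝ)) * (n θ i : ℝ) ≤ 0 :=
          mul_nonpos_of_nonpos_of_nonneg (by linarith) hn0
        have h9 := hco i
        have := hcf i
        have := hdf i
        linarith
      have : θ - β = 0 := by
        rw [hdeq]
        exact Finset.sum_eq_zero fun i _ => by rw [hcd0 i, zero_smul]
      exact hneθ (by rw [← sub_eq_zero, ← neg_sub θ β, this, neg_zero])
    interval_cases m
    · rw [hmeq]; norm_num
    · rw [hmeq]; norm_num
  -- assemble
  have hsplit := Finset.sum_erase_add Δpos (fun β => ⟪β, θ⟫ ^ 2) hθ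
  have hsplit2 := Finset.sum_erase_add Δpos (fun β => ⟪β, θ⟫) hθ
  have hsame : ∑ β ∈ Δpos.erase θ, ⟪β, θ⟫ ^ 2 = ∑ β ∈ Δpos.erase θ, ⟪β, θ⟫ :=
    Finset.sum_congr rfl fun β hβ =>
      key β (Finset.mem_of_mem_erase hβ) (Finset.ne_of_mem_erase hβ)
  have hρθ : ∑ β ∈ Δpos, ⟪β, θ⟫ = 2 * ⟪ρ, θ⟫ := by
    rw [hρ, real_inner_smul_left, ← sum_inner]
    ring
  have hnorm2 : ⟪θ, θ⟫ ^ 2 = 4 := by rw [hnorm]; norm_num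
  nlinarith [hsplit, hsplit2, hsame, hρθ, hnorm, hnorm2]
end

section
/- Let Δ be an irreducible crystallographic root system in V with a base and positive roots Δ+, let θ be the highest root, normalize so that (θ,θ) = 2, and let ρ = (1/2)·Σ_{β∈Δ+} β. Then for all ξ, η ∈ V one has Σ_{β∈Δ+} (β, ξ)(β, η) = h^∨·(ξ, η), where h^∨ := 1 + (ρ, θ) is the dual Coxeter number. -/
open scoped RealInnerProductSpace

/-- With `Δ` an irreducible crystallographic root system,
`θ` the highest root normalized so `(θ,θ) = 2`, `ρ` the half-sum of the
positive roots, and `h^∨ := 1 + (ρ,θ)` the dual Coxeter number, one has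
`∑_{β ∈ Δ⁺} (β,ξ)(β,η) = h^∨ (ξ,η)` for all `ξ, η ∈ V`. -/
theorem stmt_4 {V : Type*} [NormedAddCommGroup V] [InnerProductSpace ℝ V]
    (Δ : Finset V) (h0 : (0 : V) ∉ Δ)
    (hspan : Submodule.span ℝ (Δ : Set V) = ⊤)
    (hrefl : ∀ α ∈ Δ, ∀ β ∈ Δ, β - (2 * ⟪β, α⟫ / ⟪α, α⟫) • α ∈ Δ)
    (hcrys : ∀ α ∈ Δ, ∀ β ∈ Δ, ∃ m : ℤ, 2 * ⟪β, α⟫ = (m : ℝ) * ⟪α, α⟫)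
    (hirr : ¬ ∃ S T : Set V, S.Nonempty ∧ T.Nonempty ∧
      (∀ x ∈ S, ∀ y ∈ T, ⟪x, y⟫ = 0) ∧ (Δ : Set V) = S ∪ T)
    {ι : Type*} [Fintype ι] (b : Module.Basis ι ℝ V) (hb : ∀ i, b i ∈ Δ)
    (n : V → ι → ℤ)
    (hcoeff : ∀ β ∈ Δ, β = ∑ i, (n β i : ℝ) • b i)
    (hsign : ∀ β ∈ Δ, (∀ i, 0 ≤ n β i) ∨ (∀ i, n β i ≤ 0))
    (Δpos : Finset V)
    (hpos : ∀ β, β ∈ Δpos ↔ β ∈ Δ ∧ ∀ i, 0 ≤ n β i)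
    (θ : V) (hθ : θ ∈ Δpos)
    (hhighest : ∀ β ∈ Δ, ∃ c : ι → ℝ, (∀ i, 0 ≤ c i) ∧ θ - β = ∑ i, c i • b i)
    (hnorm : ⟪θ, θ⟫ = 2)
    (ρ : V) (hρ : ρ = (2⁻¹ : ℝ) • ∑ β ∈ Δpos, β) :
    ∀ ξ η : V, ∑ β ∈ Δpos, ⟪β, ξ⟫ * ⟪β, η⟫ = (1 + ⟪ρ, θ⟫) * ⟪ξ, η⟫ := by
  classical
  intro ξ η
  have hθΔ : θ ∈ Δ := ((hpos θ).1 hθ).1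
  have hθn : ∀ i, 0 ≤ n θ i := ((hpos θ).1 hθ).2
  have hne : ∀ β ∈ Δ, β ≠ 0 := fun β hβ h => h0 (h ▸ hβ)
  have hip : ∀ α ∈ Δ, ⟪α, α⟫ ≠ 0 := fun α hα h =>
    hne α hα (inner_self_eq_zero.mp h)
  have hrepr' : ∀ (c : ι → ℝ) (i), b.repr (∑ j, c j • b j) i = c i := by
    intro c i
    rw [b.repr_sum_self]
  have hrepr : ∀ β ∈ Δ, ∀ i, b.repr β i = (n β i : ℝ) := by
    intro β hβ i
    conv_lhs => rw [hcoeff β hβ]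
    exact hrepr' _ i
  have hneg : ∀ β ∈ Δ, -β ∈ Δ := by
    intro β hβ
    have h2 : (2 * ⟪β, β⟫ / ⟪β, β⟫ : ℝ) = 2 := by
      rw [mul_div_assoc, div_self (hip β hβ), mul_one]
    have h := hrefl β hβ β hβ
    rw [h2] at h
    have h3 : β - (2:ℝ) • β = -β := by
      rw [two_smul]; abel
    rwa [h3] at h
  have hreprneg : ∀ β ∈ Δ, ∀ i, (n (-β) i : ℝ) = -(n β i : ℝ) := by
    intro β hβ i
    rw [← hrepr (-β) (hneg β hβ), map_neg, Finsupp.neg_apply, hrepr β hβ]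
  have hzero : ∀ β ∈ Δ, (∀ i, n β i = 0) → False := by
    intro β hβ h
    apply hne β hβ
    rw [hcoeff β hβ]
    simp [h]
  have hΔposΔ : Δpos ⊆ Δ := fun β hβ => ((hpos β).1 hβ).1
  have hmemneg : ∀ β ∈ Δ, (∀ i, n β i ≤ 0) → -β ∈ Δpos := by
    intro β hβ h
    rw [hpos]
    refine ⟨hneg β hβ, fun i => ?_⟩
    have h1 : (0:ℝ) ≤ (n (-β) i : ℝ) := by
      rw [hreprneg β hβ i]
      have : (n β i : ℝ) ≤ 0 := by exact_mod_cast h i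
      linarith
    exact_mod_cast h1
  have hunion : Δ = Δpos ∪ Δpos.image (fun x => -x) := by
    ext β
    simp only [Finset.mem_union, Finset.mem_image]
    constructor
    · intro hβ
      rcases hsign β hβ with h | h
      · exact Or.inl ((hpos β).2 ⟨hβ, h⟩)
      · exact Or.inr ⟨-β, hmemneg β hβ h, by simp⟩
    · rintro (h | ⟨γ, hγ, rfl⟩)
      · exact hΔposΔ h
      · exact hneg γ (hΔposΔ hγ)
  have hdisj : Disjoint Δpos (Δpos.image (fun x => -x)) := by
    rw [Finset.disjoint_left]
    rintro β hβ hβ'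
    rcases Finset.mem_image.1 hβ' with ⟨γ, hγ, rfl⟩
    apply hzero γ (hΔposΔ hγ)
    intro i
    have h1 := ((hpos γ).1 hγ).2 i
    have h2 := ((hpos (-γ)).1 hβ).2 i
    have h3 : (n (-γ) i : ℝ) = -(n γ i : ℝ) := hreprneg γ (hΔposΔ hγ) i
    have h4 : n (-γ) i = -(n γ i) := by exact_mod_cast h3
    omega
  have hFhalf : ∀ x y : V, (∑ β ∈ Δ, ⟪β, x⟫ * ⟪β, y⟫) = 2 * ∑ β ∈ Δpos, ⟪β, x⟫ * ⟪β, y⟫ := by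
    intro x y
    rw [hunion, Finset.sum_union hdisj,
      Finset.sum_image (fun a _ c _ h => neg_injective h)]
    simp only [inner_neg_left, neg_mul_neg]
    ring
  -- self-adjointness of the reflection-type maps
  have hσadj : ∀ (α u v : V),
      ⟪u - (2*⟪u,α⟫/⟪α,α⟫)•α, v⟫ = ⟪u, v - (2*⟪v,α⟫/⟪α,α⟫)•α⟫ := by
    intro α u v
    simp only [inner_sub_left, inner_sub_right, real_inner_smul_left, real_inner_smul_right]
    rw [real_inner_comm α v]
    ring
  have hσinv : ∀ α ∈ Δ, ∀ v : V,
      (v - (2*⟪v,α⟫/⟪α,α⟫)•α) - (2*⟪v - (2*⟪v,α⟫/⟪α,α⟫)•α, α⟫/⟪α,α⟫)•α = v := by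
    intro α hα v
    have hA := hip α hα
    have h1 : ⟪v - (2*⟪v,α⟫/⟪α,α⟫)•α, α⟫ = -⟪v,α⟫ := by
      rw [inner_sub_left, real_inner_smul_left]
      field_simp
      ring
    rw [h1]
    have h2 : (2 * -⟪v,α⟫ / ⟪α,α⟫) = -(2*⟪v,α⟫/⟪α,α⟫) := by ring
    rw [h2, neg_smul]
    abel
  have hFinv : ∀ α ∈ Δ, ∀ x y : V,
      (∑ β ∈ Δ, ⟪β, x - (2*⟪x,α⟫/⟪α,α⟫)•α⟫ * ⟪β, y - (2*⟪y,α⟫/⟪α,α⟫)•α⟫)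
        = ∑ β ∈ Δ, ⟪β, x⟫ * ⟪β, y⟫ := by
    intro α hα x y
    refine Finset.sum_nbij' (fun β => β - (2*⟪β,α⟫/⟪α,α⟫)•α)
      (fun β => β - (2*⟪β,α⟫/⟪α,α⟫)•α)
      (fun β hβ => hrefl α hα β hβ) (fun β hβ => hrefl α hα β hβ)
      (fun β _ => hσinv α hα β) (fun β _ => hσinv α hα β) ?_
    intro β _
    rw [← hσadj α β x, ← hσadj α β y]
  have hFzero : ∀ α ∈ Δ, ∀ z : V, ⟪z, α⟫ = 0 → (∑ β ∈ Δ, ⟪β, α⟫ * ⟪β, z⟫) = 0 := by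
    intro α hα z hz
    have hA := hip α hα
    have h1 := hFinv α hα α z
    have hσα : α - (2*⟪α,α⟫/⟪α,α⟫)•α = -α := by
      have h2 : (2 * ⟪α, α⟫ / ⟪α, α⟫ : ℝ) = 2 := by field_simp
      rw [h2, two_smul]; abel
    have hσz : z - (2*⟪z,α⟫/⟪α,α⟫)•α = z := by
      rw [hz]; simp
    rw [hσα, hσz] at h1
    simp only [inner_neg_right, neg_mul] at h1
    rw [Finset.sum_neg_distrib] at h1
    linarith
  have hFdiag : ∀ α ∈ Δ, ∀ y : V,
      (∑ β ∈ Δ, ⟪β,α⟫*⟪β,y⟫) = (∑ β ∈ Δ, ⟪β,α⟫*⟪β,α⟫) / ⟪α,α⟫ * ⟪α,y⟫ := by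
    intro α hα y
    have hA := hip α hα
    set z := y - (⟪y,α⟫/⟪α,α⟫) • α with hzdef
    have hz : ⟪z,α⟫ = 0 := by
      rw [hzdef, inner_sub_left, real_inner_smul_left]
      field_simp
      simp
    have h0' := hFzero α hα z hz
    have hsplit : ∀ β : V, ⟪β,α⟫*⟪β,y⟫ = ⟪y,α⟫/⟪α,α⟫ * (⟪β,α⟫*⟪β,α⟫) + ⟪β,α⟫*⟪β,z⟫ := by
      intro β
      rw [hzdef, inner_sub_right, real_inner_smul_right]
      ring
    rw [Finset.sum_congr rfl (fun β _ => hsplit β), Finset.sum_add_distrib,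
      ← Finset.mul_sum, h0', real_inner_comm α y]
    ring
  have hcc : ∀ α ∈ Δ, ∀ γ ∈ Δ, ⟪α,γ⟫ ≠ 0 →
      (∑ β ∈ Δ, ⟪β,α⟫*⟪β,α⟫)/⟪α,α⟫ = (∑ β ∈ Δ, ⟪β,γ⟫*⟪β,γ⟫)/⟪γ,γ⟫ := by
    intro α hα γ hγ hne'
    have h1 := hFdiag α hα γ
    have h2 := hFdiag γ hγ α
    have h3 : (∑ β ∈ Δ, ⟪β,α⟫*⟪β,γ⟫) = ∑ β ∈ Δ, ⟪β,γ⟫*⟪β,α⟫ :=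
      Finset.sum_congr rfl fun β _ => mul_comm _ _
    rw [h1, h2, real_inner_comm γ α] at h3
    have hne2 : ⟪γ,α⟫ ≠ 0 := by rwa [real_inner_comm] at hne'
    exact mul_right_cancel₀ hne2 h3
  have hcθ : ∀ α ∈ Δ,
      (∑ β ∈ Δ, ⟪β,α⟫*⟪β,α⟫)/⟪α,α⟫ = (∑ β ∈ Δ, ⟪β,θ⟫*⟪β,θ⟫)/⟪θ,θ⟫ := by
    by_contra hco
    push_neg at hco
    obtain ⟨α, hα, hαne⟩ := hco
    apply hirr
    refine ⟨{x | x ∈ Δ ∧ (∑ β ∈ Δ, ⟪β,x⟫*⟪β,x⟫)/⟪x,x⟫ = (∑ β ∈ Δ, ⟪β,θ⟫*⟪β,θ⟫)/⟪θ,θ⟫},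
      {x | x ∈ Δ ∧ (∑ β ∈ Δ, ⟪β,x⟫*⟪β,x⟫)/⟪x,x⟫ ≠ (∑ β ∈ Δ, ⟪β,θ⟫*⟪β,θ⟫)/⟪θ,θ⟫},
      ⟨θ, hθΔ, rfl⟩, ⟨α, hα, hαne⟩, ?_, ?_⟩
    · rintro x ⟨hx, hx2⟩ y ⟨hy, hy2⟩
      by_contra hxy
      have hyx : ⟪y,x⟫ ≠ 0 := by rwa [real_inner_comm]
      exact hy2 ((hcc y hy x hx hyx).trans hx2)
    · ext x
      simp only [Finset.coe_sort_coe, Set.mem_union, Set.mem_setOf_eq, Finset.mem_coe]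
      constructor
      · intro hx
        by_cases hxc : (∑ β ∈ Δ, ⟪β,x⟫*⟪β,x⟫)/⟪x,x⟫ = (∑ β ∈ Δ, ⟪β,θ⟫*⟪β,θ⟫)/⟪θ,θ⟫
        · exact Or.inl ⟨hx, hxc⟩
        · exact Or.inr ⟨hx, hxc⟩
      · rintro (⟨hx,_⟩|⟨hx,_⟩) <;> exact hx
  have hconst : ∀ x y : V,
      (∑ β ∈ Δ, ⟪β,x⟫*⟪β,y⟫) = (∑ β ∈ Δ, ⟪β,θ⟫*⟪β,θ⟫)/⟪θ,θ⟫ * ⟪x,y⟫ := by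
    intro x y
    set cθ := (∑ β ∈ Δ, ⟪β,θ⟫*⟪β,θ⟫)/⟪θ,θ⟫ with hcθdef
    set v := (∑ β ∈ Δ, ⟪β,y⟫ • β) - cθ • y with hvdef
    have hαv : ∀ α ∈ Δ, ⟪α, v⟫ = 0 := by
      intro α hα
      rw [hvdef, inner_sub_right, real_inner_smul_right, inner_sum]
      simp only [real_inner_smul_right]
      have h1 := hFdiag α hα y
      rw [hcθ α hα] at h1
      have h2 : (∑ β ∈ Δ, ⟪β,y⟫ * ⟪α,β⟫) = ∑ β ∈ Δ, ⟪β,α⟫ * ⟪β,y⟫ :=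
        Finset.sum_congr rfl fun β _ => by rw [real_inner_comm β α, mul_comm]
      rw [h2, h1]
      ring
    have hv0 : v = 0 := by
      have hvmem : ∀ w ∈ Submodule.span ℝ (Δ : Set V), ⟪w, v⟫ = 0 := by
        intro w hw
        induction hw using Submodule.span_induction with
        | mem x hx => exact hαv x hx
        | zero => simp
        | add x y _ _ hx hy => rw [inner_add_left, hx, hy]; ring
        | smul c x _ hx => rw [real_inner_smul_left, hx]; ring
      have h := hvmem v (by rw [hspan]; trivial)
      exact inner_self_eq_zero.mp h
    have hveq : (∑ β ∈ Δ, ⟪β,y⟫ • β) = cθ • y := by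
      have := sub_eq_zero.mp hv0
      rwa [hvdef] at hv0 <;> exact sub_eq_zero.mp hv0
    calc (∑ β ∈ Δ, ⟪β,x⟫*⟪β,y⟫) = ⟪x, ∑ β ∈ Δ, ⟪β,y⟫ • β⟫ := by
          rw [inner_sum]
          exact Finset.sum_congr rfl fun β _ => by
            rw [real_inner_smul_right, real_inner_comm x β]; ring
      _ = ⟪x, cθ • y⟫ := by rw [hveq]
      _ = cθ * ⟪x,y⟫ := real_inner_smul_right _ _ _
  -- coordinates are dominated by those of θ
  have hnθle : ∀ β ∈ Δ, ∀ i, (n β i : ℝ) ≤ (n θ i : ℝ) := by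
    intro β hβ i
    obtain ⟨c, hc, hcβ⟩ := hhighest β hβ
    have h1 : b.repr (θ - β) i = c i := by rw [hcβ]; exact hrepr' c i
    rw [map_sub, Finsupp.sub_apply, hrepr θ hθΔ i, hrepr β hβ i] at h1
    have := hc i
    linarith
  have hintθ : ∀ β ∈ Δ, ∃ m : ℤ, ⟪β,θ⟫ = (m:ℝ) := by
    intro β hβ
    obtain ⟨m, hm⟩ := hcrys θ hθΔ β hβ
    rw [hnorm] at hm
    exact ⟨m, by linarith⟩
  have hkey : ∀ β ∈ Δpos, β ≠ θ → ⟪β,θ⟫ = 0 ∨ ⟪β,θ⟫ = 1 := by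
    intro β hβp hβθ
    have hβΔ : β ∈ Δ := hΔposΔ hβp
    obtain ⟨m, hm⟩ := hintθ β hβΔ
    have hγmem : β - (m:ℝ) • θ ∈ Δ := by
      have h := hrefl θ hθΔ β hβΔ
      rw [hnorm, hm] at h
      have h2 : (2 * (m:ℝ) / 2) = (m:ℝ) := by ring
      rwa [h2] at h
    have hγrepr : ∀ i, b.repr (β - (m:ℝ) • θ) i = (n β i : ℝ) - m * n θ i := by
      intro i
      rw [map_sub, map_smul, Finsupp.sub_apply, Finsupp.smul_apply,
        hrepr β hβΔ i, hrepr θ hθΔ i]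
      simp [smul_eq_mul]
    have hβn : ∀ i, (0:ℝ) ≤ (n β i : ℝ) := fun i => by
      exact_mod_cast ((hpos β).1 hβp).2 i
    have hθn' : ∀ i, (0:ℝ) ≤ (n θ i : ℝ) := fun i => by exact_mod_cast hθn i
    by_cases hm0 : (m:ℝ) < 0
    · exfalso
      have hm1 : (m:ℝ) ≤ -1 := by
        have h' : m < 0 := by exact_mod_cast hm0
        have : m ≤ -1 := by omega
        exact_mod_cast this
      obtain ⟨c, hc, hcγ⟩ := hhighest _ hγmem
      apply hzero β hβΔ
      intro i
      have hre : b.repr (θ - (β - (m:ℝ) • θ)) i = c i := by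
        rw [hcγ]; exact hrepr' c i
      rw [map_sub, Finsupp.sub_apply, hrepr θ hθΔ i, hγrepr i] at hre
      have h1 : (0:ℝ) ≤ (n θ i : ℝ) - ((n β i : ℝ) - m * n θ i) := by
        rw [hre]; exact hc i
      have h2 : ((1:ℝ)+m) * (n θ i : ℝ) ≤ 0 :=
        mul_nonpos_of_nonpos_of_nonneg (by linarith) (hθn' i)
      have h3 : (n β i : ℝ) = 0 := by nlinarith [hβn i]
      exact_mod_cast h3
    · push_neg at hm0
      by_cases hm2 : (2:ℝ) ≤ (m:ℝ)
      · exfalso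
        have hnγ : -(β - (m:ℝ) • θ) ∈ Δ := hneg _ hγmem
        have hnγpos : -(β - (m:ℝ) • θ) ∈ Δpos := by
          rw [hpos]
          refine ⟨hnγ, fun i => ?_⟩
          have h1 : (0:ℝ) ≤ (n (-(β - (m:ℝ) • θ)) i : ℝ) := by
            rw [← hrepr _ hnγ i, map_neg, Finsupp.neg_apply, hγrepr i]
            have := hnθle β hβΔ i
            nlinarith [hθn' i]
          exact_mod_cast h1
        obtain ⟨c, hc, hcγ⟩ := hhighest _ hnγ
        have hall : ∀ i, (n β i:ℝ) = ((m:ℝ)-1) * (n θ i : ℝ) := by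
          intro i
          have hre : b.repr (θ - -(β - (m:ℝ) • θ)) i = c i := by
            rw [hcγ]; exact hrepr' c i
          rw [map_sub, Finsupp.sub_apply, map_neg, Finsupp.neg_apply,
            hrepr θ hθΔ i, hγrepr i] at hre
          have h1 : (0:ℝ) ≤ (n θ i : ℝ) + ((n β i : ℝ) - m * n θ i) := by
            rw [show (n θ i : ℝ) + ((n β i : ℝ) - m * n θ i)
              = (n θ i : ℝ) - -((n β i : ℝ) - m * n θ i) by ring, hre]
            exact hc i
          have h2 := hnθle β hβΔ i
          nlinarith [hθn' i]
        have hβeq : β = ((m:ℝ)-1) • θ := by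
          rw [hcoeff β hβΔ]
          conv_rhs => rw [hcoeff θ hθΔ]
          rw [Finset.smul_sum]
          refine Finset.sum_congr rfl fun i _ => ?_
          rw [smul_smul, ← hall i]
        have hm2' : (m:ℝ) = ((m:ℝ)-1) * 2 := by
          have h : ⟪β,θ⟫ = ((m:ℝ)-1) * ⟪θ,θ⟫ := by
            conv_lhs => rw [hβeq]
            exact real_inner_smul_left _ _ _
          rw [hm, hnorm] at h
          exact h
        have : (m:ℝ) = 2 := by linarith
        apply hβθ
        rw [hβeq, this]
        norm_num
      · push_neg at hm2
        have h0' : (0:ℤ) ≤ m := by exact_mod_cast hm0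
        have h2' : m < 2 := by exact_mod_cast hm2
        interval_cases m
        · left; simpa using hm
        · right; simpa using hm
  have hθsum : (∑ β ∈ Δpos, ⟪β,θ⟫*⟪β,θ⟫) = 2 + ∑ β ∈ Δpos, ⟪β,θ⟫ := by
    have h1 : (∑ β ∈ Δpos, (⟪β,θ⟫*⟪β,θ⟫ - ⟪β,θ⟫)) = 2 := by
      rw [Finset.sum_eq_single θ]
      · rw [hnorm]; norm_num
      · intro β hβ hβθ
        rcases hkey β hβ hβθ with h | h <;> rw [h] <;> ring
      · intro h; exact absurd hθ h
    rw [Finset.sum_sub_distrib] at h1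
    linarith
  have hρθ : ⟪ρ,θ⟫ = 2⁻¹ * ∑ β ∈ Δpos, ⟪β,θ⟫ := by
    rw [hρ, real_inner_smul_left, sum_inner]
  have h1 := hconst ξ η
  have h3 := hFhalf θ θ
  have hc : (∑ β ∈ Δ, ⟪β,θ⟫*⟪β,θ⟫)/⟪θ,θ⟫ = 2 + ∑ β ∈ Δpos, ⟪β,θ⟫ := by
    rw [h3, hθsum, hnorm]; ring
  rw [hc, hFhalf ξ η] at h1
  rw [hρθ]
  linear_combination h1 / 2
end

section
/- Let Δ be an irreducible crystallographic root system in V with a base {α_1,…,α_l} and positive roots Δ+, let θ be the highest root, normalize so that (θ,θ) = 2, and let ρ = (1/2)·Σ_{β∈Δ+} β. For β ∈ Δ write β = Σ_j n_j(β) α_j. Fix an index i and let ϖ_i^∨ : V → ℝ be the unique linear functional with ϖ_i^∨(α_j) = δ_{ij} (the i-th fundamental coweight). Then for all ξ ∈ V, Σ_{β∈Δ+} n_i(β)·(β, ξ) = h^∨·ϖ_i^∨(ξ), where h^∨ := 1 + (ρ, θ) is the dual Coxeter number. (This is the first equation of Lemma 2.1: Σ_{α ∈ R̂_+ ∩ t_{ϖ_i^∨}^{−1}(R̂_−)}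 (α, ξ) = h^∨·⟨ϖ_i^∨, ξ⟩, written in terms of the finite root system.) -/
open scoped RealInnerProductSpace

/-- The reflection `ξ ↦ ξ - (2⟪ξ,α⟫/⟪α,α⟫)•α` as a linear map. -/
private noncomputable def reflMap {V : Type*} [NormedAddCommGroup V] [InnerProductSpace ℝ V]
    (α : V) : V →ₗ[ℝ] V where
  toFun ξ := ξ - (2 * ⟪ξ, α⟫ / ⟪α, α⟫) • α
  map_add' x y := by
    rw [inner_add_left,
      show 2 * (⟪x, α⟫ + ⟪y, α⟫) / ⟪α, α⟫
        = 2 * ⟪x, α⟫ / ⟪α, α⟫ + 2 * ⟪y, α⟫ / ⟪α, α⟫ by ring, add_smul]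
    abel
  map_smul' r x := by
    simp only [RingHom.id_apply, real_inner_smul_left, smul_sub, smul_smul]
    rw [show r * (2 * ⟪x, α⟫ / ⟪α, α⟫) = 2 * (r * ⟪x, α⟫) / ⟪α, α⟫ by ring]

private lemma reflMap_apply {V : Type*} [NormedAddCommGroup V] [InnerProductSpace ℝ V]
    (α ξ : V) : reflMap α ξ = ξ - (2 * ⟪ξ, α⟫ / ⟪α, α⟫) • α := rfl

private lemma reflMap_adj {V : Type*} [NormedAddCommGroup V] [InnerProductSpace ℝ V]
    (α x y : V) : ⟪reflMap α x, y⟫ = ⟪x, reflMap α y⟫ := by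
  simp only [reflMap_apply, inner_sub_left, inner_sub_right, real_inner_smul_left,
    real_inner_smul_right]
  rw [real_inner_comm α y, real_inner_comm α x]
  ring

private lemma reflMap_invol {V : Type*} [NormedAddCommGroup V] [InnerProductSpace ℝ V]
    {α : V} (hα : ⟪α, α⟫ ≠ 0) (x : V) : reflMap α (reflMap α x) = x := by
  simp only [reflMap_apply, inner_sub_left, real_inner_smul_left]
  rw [div_mul_cancel₀ _ hα,
    show 2 * (⟪x, α⟫ - 2 * ⟪x, α⟫) / ⟪α, α⟫ = -(2 * ⟪x, α⟫ / ⟪α, α⟫) by ring,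
    neg_smul, sub_neg_eq_add]
  abel

/-- The map `ξ ↦ ∑_{β ∈ P} ⟪β,ξ⟫•β` as a linear map. -/
private noncomputable def sumMap {V : Type*} [NormedAddCommGroup V] [InnerProductSpace ℝ V]
    (P : Finset V) : V →ₗ[ℝ] V where
  toFun ξ := ∑ β ∈ P, ⟪β, ξ⟫ • β
  map_add' x y := by
    simp [inner_add_right, add_smul, Finset.sum_add_distrib]
  map_smul' r x := by
    simp [real_inner_smul_right, mul_smul, Finset.smul_sum]

private lemma sumMap_apply {V : Type*} [NormedAddCommGroup V] [InnerProductSpace ℝ V]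
    (P : Finset V) (ξ : V) : sumMap P ξ = ∑ β ∈ P, ⟪β, ξ⟫ • β := rfl

/-- A nonzero subspace invariant under all the reflections of an irreducible root system
is the whole space. -/
private lemma aux_invariant {V : Type*} [NormedAddCommGroup V] [InnerProductSpace ℝ V]
    (Δ : Finset V) (h0 : (0 : V) ∉ Δ)
    (hspan : Submodule.span ℝ (Δ : Set V) = ⊤)
    (hirr : ¬ ∃ S T : Set V, S.Nonempty ∧ T.Nonempty ∧
      (∀ x ∈ S, ∀ y ∈ T, ⟪x, y⟫ = 0) ∧ (Δ : Set V) = S ∪ T)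
    (E : Submodule ℝ V) (hE : E ≠ ⊥)
    (hinv : ∀ α ∈ Δ, ∀ u ∈ E, u - (2 * ⟪u, α⟫ / ⟪α, α⟫) • α ∈ E) : E = ⊤ := by
  have hroot : ∀ α ∈ Δ, α ∈ E ∨ α ∈ Eᗮ := by
    intro α hα
    by_cases hc : ∀ u ∈ E, ⟪u, α⟫ = 0
    · exact Or.inr ((Submodule.mem_orthogonal E α).2 hc)
    · left
      push_neg at hc
      obtain ⟨u, huE, hu0⟩ := hc
      have hαα : ⟪α, α⟫ ≠ 0 := inner_self_ne_zero.2 (ne_of_mem_of_not_mem hα h0)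
      have h1 := hinv α hα u huE
      have h3 : (2 * ⟪u, α⟫ / ⟪α, α⟫) • α ∈ E := by
        have : (2 * ⟪u, α⟫ / ⟪α, α⟫) • α = u - (u - (2 * ⟪u, α⟫ / ⟪α, α⟫) • α) := by abel
        rw [this]; exact E.sub_mem huE h1
      have hc0 : (2 * ⟪u, α⟫ / ⟪α, α⟫) ≠ 0 :=
        div_ne_zero (mul_ne_zero two_ne_zero hu0) hαα
      have := E.smul_mem (2 * ⟪u, α⟫ / ⟪α, α⟫)⁻¹ h3
      rwa [smul_smul, inv_mul_cancel₀ hc0, one_smul] at this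
  by_cases hall : ∀ α ∈ Δ, α ∈ E
  · rw [eq_top_iff, ← hspan]
    exact Submodule.span_le.2 fun x hx => hall x hx
  · exfalso
    push_neg at hall
    obtain ⟨α₀, hα₀Δ, hα₀E⟩ := hall
    apply hirr
    refine ⟨(↑Δ : Set V) ∩ ↑E, (↑Δ : Set V) ∩ ↑Eᗮ, ?_, ⟨α₀, hα₀Δ,
      (hroot α₀ hα₀Δ).resolve_left hα₀E⟩, ?_, ?_⟩
    · by_contra hemp
      rw [Set.not_nonempty_iff_eq_empty] at hemp
      have hsub : (Δ : Set V) ⊆ ↑Eᗮ := by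
        intro x hx
        refine (hroot x hx).resolve_left fun hxE => ?_
        exact absurd (Set.mem_inter hx hxE) (by rw [hemp]; exact Set.notMem_empty x)
      have htop : Eᗮ = ⊤ := by
        rw [eq_top_iff, ← hspan]
        exact Submodule.span_le.2 hsub
      apply hE
      rw [eq_bot_iff]
      intro x hx
      have hxo : x ∈ Eᗮ := htop ▸ Submodule.mem_top
      have := (Submodule.mem_orthogonal E x).1 hxo x hx
      simpa [Submodule.mem_bot] using inner_self_eq_zero.1 this
    · rintro x ⟨-, hxE⟩ y ⟨-, hyE⟩
      exact (Submodule.mem_orthogonal E y).1 hyE x hxE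
    · ext x
      simp only [Set.mem_union, Set.mem_inter_iff, Finset.mem_coe]
      constructor
      · intro hx
        rcases hroot x hx with h | h
        · exact Or.inl ⟨hx, h⟩
        · exact Or.inr ⟨hx, h⟩
      · rintro (⟨h, -⟩ | ⟨h, -⟩) <;> exact h

/-- (Lemma 2.1, first equation.)  With `Δ` an irreducible
crystallographic root system with base `b`, coordinates `n`, highest root `θ`
normalized so `(θ,θ) = 2`, `ρ` the half-sum of positive roots, `h^∨ = 1 + (ρ,θ)`
the dual Coxeter number, and `ϖ` the `i`-th fundamental coweight (the linear
functional with `ϖ(α_j) = δ_{ij}`), one has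
`∑_{β ∈ Δ⁺} n_i(β)(β,ξ) = h^∨ ϖ(ξ)` for all `ξ`. -/
theorem stmt_6 {V : Type*} [NormedAddCommGroup V] [InnerProductSpace ℝ V]
    (Δ : Finset V) (h0 : (0 : V) ∉ Δ)
    (hspan : Submodule.span ℝ (Δ : Set V) = ⊤)
    (hrefl : ∀ α ∈ Δ, ∀ β ∈ Δ, β - (2 * ⟪β, α⟫ / ⟪α, α⟫) • α ∈ Δ)
    (hcrys : ∀ α ∈ Δ, ∀ β ∈ Δ, ∃ m : ℤ, 2 * ⟪β, α⟫ = (m : ℝ) * ⟪α, α⟫)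
    (hirr : ¬ ∃ S T : Set V, S.Nonempty ∧ T.Nonempty ∧
      (∀ x ∈ S, ∀ y ∈ T, ⟪x, y⟫ = 0) ∧ (Δ : Set V) = S ∪ T)
    {ι : Type*} [Fintype ι] (b : Module.Basis ι ℝ V) (hb : ∀ i, b i ∈ Δ)
    (n : V → ι → ℤ)
    (hcoeff : ∀ β ∈ Δ, β = ∑ i, (n β i : ℝ) • b i)
    (hsign : ∀ β ∈ Δ, (∀ i, 0 ≤ n β i) ∨ (∀ i, n β i ≤ 0))
    (Δpos : Finset V)
    (hpos : ∀ β, β ∈ Δpos ↔ β ∈ Δ ∧ ∀ i, 0 ≤ n β i)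
    (θ : V) (hθ : θ ∈ Δpos)
    (hhighest : ∀ β ∈ Δ, ∃ c : ι → ℝ, (∀ i, 0 ≤ c i) ∧ θ - β = ∑ i, c i • b i)
    (hnorm : ⟪θ, θ⟫ = 2)
    (ρ : V) (hρ : ρ = (2⁻¹ : ℝ) • ∑ β ∈ Δpos, β)
    [DecidableEq ι] (i : ι) (ϖ : V →ₗ[ℝ] ℝ)
    (hϖ : ∀ j, ϖ (b j) = if j = i then 1 else 0) :
    ∀ ξ : V, ∑ β ∈ Δpos, (n β i : ℝ) * ⟪β, ξ⟫ = (1 + ⟪ρ, θ⟫) * ϖ ξ := by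
  classical
  have hθΔ : θ ∈ Δ := ((hpos θ).1 hθ).1
  have hne0 : ∀ β ∈ Δ, β ≠ 0 := fun β hβ => ne_of_mem_of_not_mem hβ h0
  have hinner0 : ∀ β ∈ Δ, ⟪β, β⟫ ≠ 0 := fun β hβ => inner_self_ne_zero.2 (hne0 β hβ)
  haveI : FiniteDimensional ℝ V := Module.Basis.finiteDimensional_of_finite b
  haveI : Nontrivial V := nontrivial_of_ne θ 0 (hne0 θ hθΔ)
  -- negatives of roots are roots
  have hneg : ∀ β ∈ Δ, -β ∈ Δ := by
    intro β hβ
    have h := hrefl β hβ β hβ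
    rw [show 2 * ⟪β, β⟫ / ⟪β, β⟫ = 2 by
      rw [mul_div_assoc, div_self (hinner0 β hβ), mul_one]] at h
    rwa [two_smul, show β - (β + β) = -β by abel] at h
  -- coordinates by the basis
  have hreprn : ∀ β ∈ Δ, ∀ j, b.repr β j = (n β j : ℝ) := by
    intro β hβ j
    conv_lhs => rw [hcoeff β hβ]
    rw [b.repr_sum_self]
  have hrepr_zero : ∀ β : V, (∀ j, b.repr β j = 0) → β = 0 := by
    intro β h
    have : b.repr β = 0 := Finsupp.ext fun j => h j
    exact b.repr.map_eq_zero_iff.1 this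
  have hrepr_eq : ∀ β γ : V, (∀ j, b.repr β j = b.repr γ j) → β = γ := by
    intro β γ h
    exact b.repr.injective (Finsupp.ext fun j => h j)
  have hposr : ∀ β ∈ Δpos, ∀ j, 0 ≤ b.repr β j := by
    intro β hβ j
    rw [hreprn β ((hpos β).1 hβ).1 j]
    exact_mod_cast ((hpos β).1 hβ).2 j
  have hhigh : ∀ β ∈ Δ, ∀ j, b.repr β j ≤ b.repr θ j := by
    intro β hβ j
    obtain ⟨c, hc0, hcs⟩ := hhighest β hβ
    have h1 : b.repr (θ - β) = c := by rw [hcs, b.repr_sum_self]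
    have h2 : b.repr θ j - b.repr β j = c j := by
      rw [← h1, map_sub, Finsupp.sub_apply]
    linarith [hc0 j]
  -- the decomposition Δ = Δpos ∪ (-Δpos)
  have hsplit : Δ = Δpos ∪ Δpos.image (fun x => -x) := by
    ext β
    constructor
    · intro hβ
      rcases hsign β hβ with h | h
      · exact Finset.mem_union_left _ ((hpos β).2 ⟨hβ, h⟩)
      · refine Finset.mem_union_right _ (Finset.mem_image.2 ⟨-β, ?_, neg_neg β⟩)
        refine (hpos (-β)).2 ⟨hneg β hβ, fun j => ?_⟩
        have h1 : b.repr (-β) j = -(b.repr β j) := by rw [map_neg, Finsupp.neg_apply]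
        rw [hreprn (-β) (hneg β hβ) j, hreprn β hβ j] at h1
        have h2 : n (-β) j = -(n β j) := by exact_mod_cast h1
        rw [h2]
        exact neg_nonneg.2 (h j)
    · intro hβ
      rcases Finset.mem_union.1 hβ with h | h
      · exact ((hpos β).1 h).1
      · obtain ⟨γ, hγ, rfl⟩ := Finset.mem_image.1 h
        exact hneg γ ((hpos γ).1 hγ).1
  have hdisj : Disjoint Δpos (Δpos.image (fun x => -x)) := by
    rw [Finset.disjoint_left]
    intro β hβ hβ'
    obtain ⟨γ, hγ, hγβ⟩ := Finset.mem_image.1 hβ'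
    have hβΔ : β ∈ Δ := ((hpos β).1 hβ).1
    apply hne0 β hβΔ
    apply hrepr_zero
    intro j
    have h1 : 0 ≤ b.repr β j := hposr β hβ j
    have h2 : 0 ≤ b.repr γ j := hposr γ hγ j
    have h3 : b.repr β j = -(b.repr γ j) := by
      rw [← hγβ, map_neg, Finsupp.neg_apply]
    linarith
  -- halving
  have hhalf : ∀ ξ : V, sumMap Δ ξ = (2 : ℝ) • sumMap Δpos ξ := by
    intro ξ
    rw [sumMap_apply, sumMap_apply, hsplit, Finset.sum_union hdisj,
      Finset.sum_image (fun x _ y _ h => neg_injective h)]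
    have : ∀ β ∈ Δpos, ⟪-β, ξ⟫ • (-β) = ⟪β, ξ⟫ • β := by
      intro β _
      rw [inner_neg_left, neg_smul, smul_neg, neg_neg]
    rw [Finset.sum_congr rfl this, two_smul]
  -- equivariance over the full root system
  have hequivΔ : ∀ α ∈ Δ, ∀ ξ : V, sumMap Δ (reflMap α ξ) = reflMap α (sumMap Δ ξ) := by
    intro α hα ξ
    have hαα := hinner0 α hα
    rw [sumMap_apply, sumMap_apply, map_sum]
    calc ∑ β ∈ Δ, ⟪β, reflMap α ξ⟫ • β
        = ∑ β ∈ Δ, ⟪reflMap α β, ξ⟫ • β :=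
          Finset.sum_congr rfl fun β _ => by rw [reflMap_adj]
      _ = ∑ β ∈ Δ, ⟪β, ξ⟫ • reflMap α β := by
          refine Finset.sum_bij' (fun β _ => reflMap α β) (fun β _ => reflMap α β)
            ?_ ?_ ?_ ?_ ?_
          · intro β hβ
            show reflMap α β ∈ Δ
            rw [reflMap_apply]
            exact hrefl α hα β hβ
          · intro β hβ
            show reflMap α β ∈ Δ
            rw [reflMap_apply]
            exact hrefl α hα β hβ
          · intro β _; exact reflMap_invol hαα β
          · intro β _; exact reflMap_invol hαα β
          · intro β _
            show _ = ⟪reflMap α β, ξ⟫ • reflMap α (reflMap α β)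
            rw [reflMap_invol hαα β]
      _ = ∑ β ∈ Δ, reflMap α (⟪β, ξ⟫ • β) :=
          Finset.sum_congr rfl fun β _ => by rw [map_smul]
  -- equivariance over positive roots
  have hequiv : ∀ α ∈ Δ, ∀ ξ : V,
      sumMap Δpos (reflMap α ξ) = reflMap α (sumMap Δpos ξ) := by
    intro α hα ξ
    have h2 : (2 : ℝ) • sumMap Δpos (reflMap α ξ) = (2 : ℝ) • reflMap α (sumMap Δpos ξ) := by
      rw [← hhalf, hequivΔ α hα, hhalf, map_smul]
    exact smul_right_injective V two_ne_zero h2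
  -- symmetry
  have hsymm : (sumMap Δpos : V →ₗ[ℝ] V).IsSymmetric := by
    intro x y
    rw [sumMap_apply, sumMap_apply, sum_inner, inner_sum]
    refine Finset.sum_congr rfl fun β _ => ?_
    rw [real_inner_smul_left, real_inner_smul_right, real_inner_comm β x]
    ring
  -- an eigenvalue
  obtain ⟨μ, hμ⟩ : ∃ μ : ℝ, Module.End.HasEigenvalue (sumMap Δpos : V →ₗ[ℝ] V) μ :=
    ⟨_, hsymm.hasEigenvalue_iSup_of_finiteDimensional⟩
  set E := Module.End.eigenspace (sumMap Δpos : V →ₗ[ℝ] V) μ with hEdef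
  have hEbot : E ≠ ⊥ := hμ
  have hEinv : ∀ α ∈ Δ, ∀ u ∈ E, u - (2 * ⟪u, α⟫ / ⟪α, α⟫) • α ∈ E := by
    intro α hα u hu
    rw [Module.End.mem_eigenspace_iff] at hu ⊢
    rw [show u - (2 * ⟪u, α⟫ / ⟪α, α⟫) • α = reflMap α u from (reflMap_apply α u).symm,
      hequiv α hα, hu, map_smul]
  have hEtop : E = ⊤ := aux_invariant Δ h0 hspan hirr E hEbot hEinv
  have hS : ∀ x : V, sumMap Δpos x = μ • x := by
    intro x
    have hx : x ∈ E := by rw [hEtop]; exact Submodule.mem_top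
    exact Module.End.mem_eigenspace_iff.1 hx
  -- the values ⟪β,θ⟫ for positive roots β ≠ θ are 0 or 1
  have hkey : ∀ β ∈ Δpos, β ≠ θ → ⟪β, θ⟫ = 0 ∨ ⟪β, θ⟫ = 1 := by
    intro β hβp hβθ
    have hβΔ : β ∈ Δ := ((hpos β).1 hβp).1
    obtain ⟨k, hk2⟩ := hcrys θ hθΔ β hβΔ
    have hk : ⟪β, θ⟫ = (k : ℝ) := by rw [hnorm] at hk2; linarith
    have hγΔ : β - (k : ℝ) • θ ∈ Δ := by
      have h := hrefl θ hθΔ β hβΔ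
      rwa [show 2 * ⟪β, θ⟫ / ⟪θ, θ⟫ = (k : ℝ) by rw [hnorm, hk]; ring] at h
    have hγrepr : ∀ j, b.repr (β - (k : ℝ) • θ) j = b.repr β j - (k : ℝ) * b.repr θ j := by
      intro j
      rw [map_sub, map_smul, Finsupp.sub_apply, Finsupp.smul_apply, smul_eq_mul]
    by_cases hk0 : k < 0
    · exfalso
      apply hne0 β hβΔ
      apply hrepr_zero
      intro j
      have h1 := hhigh _ hγΔ j
      rw [hγrepr j] at h1
      have h2 : 0 ≤ b.repr β j := hposr β hβp j
      have h3 : 0 ≤ b.repr θ j := hposr θ hθ j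
      have h4 : (k : ℝ) ≤ -1 := by exact_mod_cast (by omega : k ≤ -1)
      nlinarith
    · by_cases hk1 : 2 ≤ k
      · exfalso
        apply hβθ
        apply hrepr_eq
        intro j
        have hng := hneg _ hγΔ
        have h1 := hhigh _ hng j
        have h5 : b.repr (-(β - (k : ℝ) • θ)) j = -(b.repr β j) + (k : ℝ) * b.repr θ j := by
          rw [map_neg, Finsupp.neg_apply, hγrepr]; ring
        rw [h5] at h1
        have h2 := hhigh β hβΔ j
        have h3 : 0 ≤ b.repr θ j := hposr θ hθ j
        have h6 : (2 : ℝ) ≤ (k : ℝ) := by exact_mod_cast hk1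
        nlinarith
      · have : k = 0 ∨ k = 1 := by omega
        rcases this with h | h
        · left; rw [hk, h]; norm_num
        · right; rw [hk, h]; norm_num
  -- compute the eigenvalue
  have h1 : ⟪sumMap Δpos θ, θ⟫ = μ * 2 := by
    rw [hS θ, real_inner_smul_left, hnorm]
  have h2 : ⟪sumMap Δpos θ, θ⟫ = ∑ β ∈ Δpos, ⟪β, θ⟫ * ⟪β, θ⟫ := by
    rw [sumMap_apply, sum_inner]
    exact Finset.sum_congr rfl fun β _ => real_inner_smul_left β θ _
  have hsq : ∑ β ∈ Δpos, ⟪β, θ⟫ * ⟪β, θ⟫ = 2 + ∑ β ∈ Δpos, ⟪β, θ⟫ := by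
    rw [← Finset.add_sum_erase _ (fun β => ⟪β, θ⟫ * ⟪β, θ⟫) hθ,
      ← Finset.add_sum_erase _ (fun β => ⟪β, θ⟫) hθ, hnorm]
    have heq : ∑ β ∈ Δpos.erase θ, ⟪β, θ⟫ * ⟪β, θ⟫ = ∑ β ∈ Δpos.erase θ, ⟪β, θ⟫ :=
      Finset.sum_congr rfl fun β hβ => by
        rcases hkey β (Finset.mem_of_mem_erase hβ) (Finset.ne_of_mem_erase hβ) with h | h <;>
          rw [h] <;> ring
    rw [heq]; ring
  have hρθ : ⟪ρ, θ⟫ = 2⁻¹ * ∑ β ∈ Δpos, ⟪β, θ⟫ := by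
    rw [hρ, real_inner_smul_left, sum_inner]
  have hμval : μ = 1 + ⟪ρ, θ⟫ := by
    rw [h2] at h1
    rw [hsq] at h1
    rw [hρθ]
    linarith
  -- conclude
  intro ξ
  have hstep : ∀ β ∈ Δpos, (n β i : ℝ) * ⟪β, ξ⟫ = ϖ (⟪β, ξ⟫ • β) := by
    intro β hβ
    have hβΔ : β ∈ Δ := ((hpos β).1 hβ).1
    have hϖβ : ϖ β = (n β i : ℝ) := by
      conv_lhs => rw [hcoeff β hβΔ]
      rw [map_sum]
      simp only [map_smul, hϖ, smul_eq_mul, mul_ite, mul_one, mul_zero]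
      simp
    rw [map_smul, smul_eq_mul, hϖβ]
    ring
  rw [Finset.sum_congr rfl hstep, ← map_sum, ← sumMap_apply, hS, map_smul, smul_eq_mul, hμval]
end

section
/- Fix an integer n ≥ 1. In the Laurent polynomial ring ℚ[z_1^{±1}, …, z_n^{±1}], the constant term of ∏_{1 ≤ i ≠ j ≤ n} (1 − z_i z_j^{−1}) equals n!. -/
/-- The monomial `z_i^k` in the ring of Laurent polynomials
`ℚ[z₁^{±1}, …, z_n^{±1}]`, realized as the group algebra of `Fin n →₀ ℤ`. -/
noncomputable def LaurentZ (n : ℕ) (i : Fin n) (k : ℤ) :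
    AddMonoidAlgebra ℚ (Fin n →₀ ℤ) :=
  AddMonoidAlgebra.single (Finsupp.single i k) 1

lemma LZ_mul (n : ℕ) (i : Fin n) (k l : ℤ) :
    LaurentZ n i k * LaurentZ n i l = LaurentZ n i (k + l) := by
  simp [LaurentZ, AddMonoidAlgebra.single_mul_single, Finsupp.single_add]

lemma LZ_inv (n : ℕ) (i : Fin n) :
    LaurentZ n i 1 * LaurentZ n i (-1) = 1 := by
  rw [LZ_mul]
  simp [LaurentZ, AddMonoidAlgebra.one_def]

lemma LZ_pow (n : ℕ) (i : Fin n) (c : ℤ) (m : ℕ) :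
    LaurentZ n i c ^ m = AddMonoidAlgebra.single (Finsupp.single i (m * c)) 1 := by
  rw [LaurentZ, AddMonoidAlgebra.single_pow]
  simp [Finsupp.smul_single, mul_comm]

lemma pair_eq (n : ℕ) (i j : Fin n) :
    (1 - LaurentZ n i 1 * LaurentZ n j (-1)) * (1 - LaurentZ n j 1 * LaurentZ n i (-1))
      = (LaurentZ n j 1 - LaurentZ n i 1) * (LaurentZ n j (-1) - LaurentZ n i (-1)) := by
  have hi := LZ_inv n i
  have hj := LZ_inv n j
  linear_combination (LaurentZ n j 1 * LaurentZ n j (-1) - 1) * hi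

/-- The exponent Finsupp `∑ i, single (σ i) (c i)` evaluated at `j` is `c (σ.symm j)`. -/
lemma exp_apply {n : ℕ} (σ : Equiv.Perm (Fin n)) (c : Fin n → ℤ) (j : Fin n) :
    (∑ i : Fin n, Finsupp.single (σ i) (c i)) j = c (σ.symm j) := by
  rw [Finset.sum_apply']
  rw [Finset.sum_eq_single (σ.symm j)]
  · simp
  · intro b _ hb
    rw [Finsupp.single_apply, if_neg]
    intro h
    exact hb (by simp [← h])
  · simp

lemma exp_eq_iff {n : ℕ} (σ τ : Equiv.Perm (Fin n)) :
    (∑ i : Fin n, Finsupp.single (σ i) ((i : ℤ)))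
      + (∑ i : Fin n, Finsupp.single (τ i) (-(i : ℤ))) = 0 ↔ σ = τ := by
  constructor
  · intro h
    have key : ∀ j, (((σ.symm j : Fin n) : ℕ) : ℤ) - ((τ.symm j : Fin n) : ℕ) = 0 := by
      intro j
      have := DFunLike.congr_fun h j
      rw [Finsupp.add_apply, exp_apply, exp_apply] at this
      simpa [sub_eq_add_neg] using this
    have hsymm : σ.symm = τ.symm := by
      ext j
      have := key j
      omega
    have : σ.symm.symm = τ.symm.symm := by rw [hsymm]
    simpa using this
  · rintro rfl
    rw [← Finset.sum_add_distrib]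
    apply Finset.sum_eq_zero
    intro i _
    rw [← Finsupp.single_add]
    simp

/-- In `ℚ[z₁^{±1}, …, z_n^{±1}]` the constant term of
`∏_{i ≠ j} (1 − z_i z_j^{−1})` equals `n!`. -/
theorem stmt_10 (n : ℕ) (hn : 1 ≤ n) :
    ((∏ p ∈ Finset.univ.filter (fun p : Fin n × Fin n => p.1 ≠ p.2),
        (1 - LaurentZ n p.1 1 * LaurentZ n p.2 (-1))).coeff 0 : ℚ)
      = (n.factorial : ℚ) := by
  classical
  set X := LaurentZ n with hX
  -- Step 1: split the product over ordered pairs into i < j and j < i parts.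
  have hsplit : (Finset.univ.filter (fun p : Fin n × Fin n => p.1 ≠ p.2))
      = (Finset.univ.filter (fun p : Fin n × Fin n => p.1 < p.2))
        ∪ (Finset.univ.filter (fun p : Fin n × Fin n => p.2 < p.1)) := by
    ext p
    simp only [Finset.mem_filter, Finset.mem_union, Finset.mem_univ, true_and]
    constructor
    · exact fun h => lt_or_gt_of_ne h
    · rintro (h | h)
      · exact ne_of_lt h
      · exact (ne_of_lt h).symm
  have hdisj : Disjoint (Finset.univ.filter (fun p : Fin n × Fin n => p.1 < p.2))
      (Finset.univ.filter (fun p : Fin n × Fin n => p.2 < p.1)) := by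
    rw [Finset.disjoint_filter]
    intro p _ h1 h2
    exact absurd h1 (not_lt_of_gt h2)
  -- the second part via swap
  have hswap : ∀ f : Fin n × Fin n → AddMonoidAlgebra ℚ (Fin n →₀ ℤ),
      ∏ p ∈ Finset.univ.filter (fun p : Fin n × Fin n => p.2 < p.1), f p
      = ∏ p ∈ Finset.univ.filter (fun p : Fin n × Fin n => p.1 < p.2), f p.swap := by
    intro f
    apply Finset.prod_nbij' (fun p => p.swap) (fun p => p.swap)
    · intro a ha; simp_all
    · intro a ha; simp_all
    · intro a _; rfl
    · intro a _; rfl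
    · intro a _; rfl
  have hpairs : ∀ g : Fin n → Fin n → AddMonoidAlgebra ℚ (Fin n →₀ ℤ),
      ∏ p ∈ Finset.univ.filter (fun p : Fin n × Fin n => p.1 < p.2), g p.1 p.2
      = ∏ i : Fin n, ∏ j ∈ Finset.Ioi i, g i j := by
    intro g
    rw [Finset.prod_filter, ← Finset.univ_product_univ, Finset.prod_product]
    refine Finset.prod_congr rfl fun i _ => ?_
    rw [← Finset.prod_filter]
    congr 1
    ext j
    simp
  have step1 : (∏ p ∈ Finset.univ.filter (fun p : Fin n × Fin n => p.1 ≠ p.2),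
        (1 - X p.1 1 * X p.2 (-1)))
      = (∏ i : Fin n, ∏ j ∈ Finset.Ioi i, (X j 1 - X i 1))
        * (∏ i : Fin n, ∏ j ∈ Finset.Ioi i, (X j (-1) - X i (-1))) := by
    rw [hsplit, Finset.prod_union hdisj, hswap, ← Finset.prod_mul_distrib]
    have : ∀ p ∈ Finset.univ.filter (fun p : Fin n × Fin n => p.1 < p.2),
        (1 - X p.1 1 * X p.2 (-1)) * (1 - X p.swap.1 1 * X p.swap.2 (-1))
        = (X p.2 1 - X p.1 1) * (X p.2 (-1) - X p.1 (-1)) := by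
      intro p _
      exact pair_eq n p.1 p.2
    rw [Finset.prod_congr rfl this,
      hpairs (fun i j => (X j 1 - X i 1) * (X j (-1) - X i (-1))),
      ← Finset.prod_mul_distrib]
    exact Finset.prod_congr rfl fun i _ => Finset.prod_mul_distrib
  -- Step 2: each factor is a Vandermonde determinant, hence a sum over permutations.
  have vdm : ∀ c : ℤ, (∏ i : Fin n, ∏ j ∈ Finset.Ioi i, (X j c - X i c))
      = ∑ σ : Equiv.Perm (Fin n), (Equiv.Perm.sign σ : ℤ)
          • AddMonoidAlgebra.single (∑ i : Fin n, Finsupp.single (σ i) ((i : ℤ) * c)) (1 : ℚ) := by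
    intro c
    rw [← Matrix.det_vandermonde (fun i => X i c), Matrix.det_apply]
    refine Finset.sum_congr rfl fun σ _ => ?_
    congr 1
    rw [show (∏ i, Matrix.vandermonde (fun i => X i c) (σ i) i)
        = ∏ i : Fin n, AddMonoidAlgebra.single (Finsupp.single (σ i) ((i : ℤ) * c)) (1 : ℚ)
      from Finset.prod_congr rfl fun i _ => by
        rw [Matrix.vandermonde_apply, hX, LZ_pow]]
    rw [AddMonoidAlgebra.prod_single]
    simp
  have key : ∀ σ : Equiv.Perm (Fin n),
      ((∑ i : Fin n, Finsupp.single (σ i) ((i : ℤ) * 1))) = ∑ i : Fin n, Finsupp.single (σ i) ((i : ℤ)) := by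
    intro σ; simp
  have key' : ∀ τ : Equiv.Perm (Fin n),
      ((∑ i : Fin n, Finsupp.single (τ i) ((i : ℤ) * (-1)))) = ∑ i : Fin n, Finsupp.single (τ i) (-(i : ℤ)) := by
    intro τ; simp [mul_neg]
  rw [step1, vdm 1, vdm (-1)]
  simp only [key, key']
  rw [Finset.sum_mul_sum]
  -- evaluate the coefficient at 0
  rw [AddMonoidAlgebra.coeff_sum, Finset.sum_apply']
  have inner : ∀ σ : Equiv.Perm (Fin n),
      (∑ τ : Equiv.Perm (Fin n),
        ((Equiv.Perm.sign σ : ℤ) • AddMonoidAlgebra.single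
            (∑ i : Fin n, Finsupp.single (σ i) ((i : ℤ))) (1 : ℚ))
        * ((Equiv.Perm.sign τ : ℤ) • AddMonoidAlgebra.single
            (∑ i : Fin n, Finsupp.single (τ i) (-(i : ℤ))) (1 : ℚ))).coeff 0 = 1 := by
    intro σ
    rw [AddMonoidAlgebra.coeff_sum, Finset.sum_apply']
    have term : ∀ τ : Equiv.Perm (Fin n),
        (((Equiv.Perm.sign σ : ℤ) • AddMonoidAlgebra.single
            (∑ i : Fin n, Finsupp.single (σ i) ((i : ℤ))) (1 : ℚ))
          * ((Equiv.Perm.sign τ : ℤ) • AddMonoidAlgebra.single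
            (∑ i : Fin n, Finsupp.single (τ i) (-(i : ℤ))) (1 : ℚ))).coeff 0
        = if σ = τ then (((Equiv.Perm.sign σ : ℤ) : ℚ) * ((Equiv.Perm.sign τ : ℤ) : ℚ)) else 0 := by
      intro τ
      rw [zsmul_eq_mul, zsmul_eq_mul, AddMonoidAlgebra.intCast_def,
        AddMonoidAlgebra.intCast_def, AddMonoidAlgebra.single_mul_single,
        AddMonoidAlgebra.single_mul_single, AddMonoidAlgebra.single_mul_single]
      rw [AddMonoidAlgebra.coeff_single, Finsupp.single_apply]
      simp only [zero_add, mul_one, one_mul]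
      by_cases h : σ = τ
      · rw [if_pos ((exp_eq_iff σ τ).mpr h), if_pos h]
      · rw [if_neg (fun hc => h ((exp_eq_iff σ τ).mp hc)), if_neg h]
    rw [Finset.sum_congr rfl (fun τ _ => term τ), Finset.sum_ite_eq]
    simp only [Finset.mem_univ, if_true]
    rcases Int.units_eq_one_or (Equiv.Perm.sign σ) with h | h <;> simp [h]
  rw [Finset.sum_congr rfl (fun σ _ => inner σ)]
  simp [Fintype.card_perm]
end
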